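/- arXiv:1505.05398 — 4 statements merged into one kernel-verified Lean document; each statement's English description precedes it below -/
import Mathlib

section
/- Let V = V₁ + iV₂ with V₁, V₂ : [0,1] × ℤ → ℝ and V₂ bounded, and let u ∈ C¹([0,1], ℓ²(ℤ)) be a strong solution of ∂_t u(t,n) = i((Δ_d u)(t,n) + V(t,n)u(t,n)). Suppose that Σ_{n>0} n^{2αn}·|u(0,n)|² < ∞ for some α ≤ 1. Then for each t ∈ [0,1] one has Σ_{n>0} n^{αn}·|u(t,n)|² < ∞. -/
/-
For `α ≤ 0` the weights are at most `1`. For `α > 0` put `v(t) = e^{(1 - t/2) θ} u(t)` with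
`θ(n) = α · n log n` for `n > 0` (and `0` otherwise), capped at a level `N` so that `v(t) ∈ ℓ²`.
Then `‖v(t)‖² = Σ e^{(2 - t) θ(n)} |u(t,n)|²` dominates `Σ_{n ≤ N} n^{αn} |u(t,n)|²`, and at
`t = 0` it is at most `Σ n^{2αn} |u(0,n)|²`.
Conjugated by the weight, the discrete Laplacian has hopping coefficients `e^{±(1 - t/2) Δθ}`;
summing by parts over the bonds `(n, n + 1)` bounds their contribution to `d/dt ‖v‖²` by
`Σ (e^{Δθ(n)} + e^{Δθ(n-1)}) |v_n|²` with `e^{Δθ(n)} ≤ e (n + 1)^α`, while the shrinking time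
factor contributes `-Σ θ(n) |v_n|²`. As `n^α ≪ α n log n` for `α ≤ 1`, this gives
`d/dt ‖v‖² ≤ (K + 2M) ‖v‖²` with `K` independent of `N` (`V₁` drops out, `V₂` costs `2M`), and
Grönwall's inequality bounds `‖v(t)‖²` uniformly in `N`.
-/

open scoped ENNReal

noncomputable section

open Real Set
open Complex (I)
open scoped ComplexConjugate

local notation "ℓ²" => lp (fun _ : ℤ => ℂ) 2
local notation "ℓ^∞" => lp (fun _ : ℤ => ℝ) ∞

def mulLogNat (k : ℕ) : ℝ := k * log k

lemma mulLogNat_nonneg (k : ℕ) : 0 ≤ mulLogNat k :=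
  mul_nonneg k.cast_nonneg (log_natCast_nonneg k)

lemma mulLogNat_mono : Monotone mulLogNat := by
  intro a b hab
  rcases Nat.eq_zero_or_pos a with rfl | ha
  · simpa [mulLogNat] using mulLogNat_nonneg b
  have hab' : (a : ℝ) ≤ b := by exact_mod_cast hab
  exact mul_le_mul hab' (log_le_log (by positivity) hab') (log_natCast_nonneg a) b.cast_nonneg

lemma mulLogNat_succ_sub_le (k : ℕ) : mulLogNat (k + 1) - mulLogNat k ≤ log (k + 1) + 1 := by
  rcases Nat.eq_zero_or_pos k with rfl | hk
  · simp [mulLogNat]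
  have hk' : (0 : ℝ) < k := by exact_mod_cast hk
  have hlog : (k : ℝ) * (log (k + 1) - log k) ≤ 1 := by
    rw [← log_div (by positivity) hk'.ne']
    have := log_le_sub_one_of_pos (show (0 : ℝ) < (k + 1) / k by positivity)
    calc (k : ℝ) * log ((k + 1) / k) ≤ k * ((k + 1) / k - 1) := by gcongr
      _ = 1 := by field_simp; ring
  simp only [mulLogNat, Nat.cast_add, Nat.cast_one]
  linarith

lemma mulLogNat_sub_pred_le (k : ℕ) : mulLogNat k - mulLogNat (k - 1) ≤ log (k + 1) + 1 := by
  cases k with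
  | zero => simp
  | succ k =>
    have hlog : log (k + 1) ≤ log (k + 1 + 1) := log_le_log (by positivity) (by linarith)
    rw [Nat.add_sub_cancel]
    push_cast
    linarith [mulLogNat_succ_sub_le k]

lemma exp_mul_le_of_le_log_add_one {α Δ x : ℝ} (hα1 : α ≤ 1) (hΔ : 0 ≤ Δ)
    (hx : 0 < x) (h : Δ ≤ log x + 1) : exp (α * Δ) ≤ exp 1 * x := by
  calc exp (α * Δ) ≤ exp (log x + 1) := exp_le_exp.2 (by nlinarith)
    _ = exp 1 * x := by rw [exp_add, exp_log hx, mul_comm]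

lemma exists_mul_le_mul_mulLogNat_add {α c : ℝ} (hα : 0 < α) (hc : 0 ≤ c) :
    ∃ K, ∀ k : ℕ, c * k ≤ α * mulLogNat k + K := by
  refine ⟨c * exp (c / α), fun k => ?_⟩
  have hαf := mul_nonneg hα.le (mulLogNat_nonneg k)
  rcases le_or_gt (c / α) (log k) with hlog | hlog
  · have : c * k ≤ α * mulLogNat k := by
      calc c * k = α * (k * (c / α)) := by field_simp
        _ ≤ α * mulLogNat k := by unfold mulLogNat; gcongr
    nlinarith [exp_pos (c / α)]
  · rcases Nat.eq_zero_or_pos k with rfl | hk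
    · simpa [mulLogNat] using (by positivity : 0 ≤ c * exp (c / α))
    have : (k : ℝ) ≤ exp (c / α) := ((log_lt_iff_lt_exp (by positivity)).1 hlog).le
    nlinarith

theorem exists_exp_mulLogNat_sub_add_le {α : ℝ} (hα0 : 0 < α) (hα1 : α ≤ 1) :
    ∃ K, ∀ k : ℕ, exp (α * (mulLogNat (k + 1) - mulLogNat k))
      + exp (α * (mulLogNat k - mulLogNat (k - 1))) ≤ α * mulLogNat k + K := by
  obtain ⟨K, hK⟩ := exists_mul_le_mul_mulLogNat_add hα0 (c := 2 * exp 1) (by positivity)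
  refine ⟨K + 2 * exp 1, fun k => ?_⟩
  have hk : (0 : ℝ) < k + 1 := by positivity
  have h₁ := exp_mul_le_of_le_log_add_one hα1
    (sub_nonneg.2 (mulLogNat_mono k.le_succ)) hk (mulLogNat_succ_sub_le k)
  have h₂ := exp_mul_le_of_le_log_add_one hα1
    (sub_nonneg.2 (mulLogNat_mono (k.sub_le 1))) hk (mulLogNat_sub_pred_le k)
  linarith [hK k]

def cappedMulLog (N : ℕ) (n : ℤ) : ℝ := mulLogNat (min n.toNat N)

lemma cappedMulLog_mono (N : ℕ) : Monotone (cappedMulLog N) := fun _ _ h =>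
  mulLogNat_mono (min_le_min_right N (Int.toNat_le_toNat h))

lemma cappedMulLog_le_mulLogNat_toNat (N : ℕ) (n : ℤ) : cappedMulLog N n ≤ mulLogNat n.toNat :=
  mulLogNat_mono (min_le_left _ _)

lemma cappedMulLog_natCast {N k : ℕ} (hk : k ≤ N) : cappedMulLog N k = mulLogNat k := by
  simp [cappedMulLog, hk]

theorem exp_cappedMulLog_sub_add_le {α K : ℝ} (hα : 0 ≤ α)
    (hK : ∀ k : ℕ, exp (α * (mulLogNat (k + 1) - mulLogNat k))
      + exp (α * (mulLogNat k - mulLogNat (k - 1))) ≤ α * mulLogNat k + K) (N : ℕ) (n : ℤ) :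
    exp (α * (cappedMulLog N (n + 1) - cappedMulLog N n))
      + exp (α * (cappedMulLog N n - cappedMulLog N (n - 1))) ≤ α * cappedMulLog N n + K := by
  set k := min n.toNat N
  have h₁ : cappedMulLog N (n + 1) ≤ mulLogNat (k + 1) := mulLogNat_mono (by omega)
  have h₂ : mulLogNat (k - 1) ≤ cappedMulLog N (n - 1) := mulLogNat_mono (by omega)
  have hup := exp_le_exp.2 (mul_le_mul_of_nonneg_left (sub_le_sub_right h₁ (mulLogNat k)) hα)
  have hdown := exp_le_exp.2 (mul_le_mul_of_nonneg_left (sub_le_sub_left h₂ (mulLogNat k)) hα)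
  simp only [cappedMulLog] at hup hdown ⊢
  linarith [hK k]

def cappedExponent (α : ℝ) (N : ℕ) : ℓ^∞ :=
  ⟨fun n => α * cappedMulLog N n, memℓp_infty ⟨|α| * mulLogNat N, by
    rintro _ ⟨n, rfl⟩
    dsimp only
    rw [norm_mul, Real.norm_eq_abs, Real.norm_eq_abs, cappedMulLog,
      abs_of_nonneg (mulLogNat_nonneg _)]
    exact mul_le_mul_of_nonneg_left (mulLogNat_mono (min_le_right _ _)) (abs_nonneg α)⟩⟩

lemma cappedExponent_apply (α : ℝ) (N : ℕ) (n : ℤ) : cappedExponent α N n = α * cappedMulLog N n :=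
  rfl

namespace lp

variable {ι : Type*}

section SMulInfty

variable {𝕜 : Type*} [RCLike 𝕜] {E : ι → Type*} [∀ i, NormedAddCommGroup (E i)]
  [∀ i, NormedSpace 𝕜 (E i)] {p : ℝ≥0∞}

lemma memℓp_smul_infty (c : lp (fun _ : ι => 𝕜) ∞) (x : lp E p) :
    Memℓp (fun i => c i • x i) p :=
  ((lp.memℓp x).norm.const_mul ‖c‖).mono fun i => by
    rw [norm_smul]
    exact mul_le_mul_of_nonneg_right (norm_apply_le_norm ENNReal.top_ne_zero c i) (norm_nonneg _)

variable [Fact (1 ≤ p)]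

variable (𝕜 E p) in
def smulInftyCLM : lp (fun _ : ι => 𝕜) ∞ →L[𝕜] lp E p →L[𝕜] lp E p :=
  LinearMap.mkContinuous₂
    { toFun c :=
       { toFun x := ⟨fun i => c i • x i, memℓp_smul_infty c x⟩
         map_add' _ _ := lp.ext <| funext fun _ => smul_add _ _ _
         map_smul' _ _ := lp.ext <| funext fun _ => smul_comm _ _ _ }
      map_add' _ _ := LinearMap.ext fun _ => lp.ext <| funext fun _ => add_smul _ _ _
      map_smul' _ _ := LinearMap.ext fun _ => lp.ext <| funext fun _ => mul_smul _ _ _ }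
    1 fun c x => by
      have hp : p ≠ 0 := (zero_lt_one.trans_le Fact.out).ne'
      calc _ ≤ ‖(‖c‖ : 𝕜) • x‖ := norm_mono hp fun i => by
              change ‖c i • x i‖ ≤ _
              rw [lp.coeFn_smul, Pi.smul_apply, norm_smul, norm_smul, RCLike.norm_ofReal, abs_norm]
              exact mul_le_mul_of_nonneg_right (norm_apply_le_norm ENNReal.top_ne_zero c i)
                (norm_nonneg _)
        _ = 1 * ‖c‖ * ‖x‖ := by rw [norm_const_smul hp, RCLike.norm_ofReal, abs_norm, one_mul]

@[simp] lemma smulInftyCLM_apply (c : lp (fun _ : ι => 𝕜) ∞) (x : lp E p) (i : ι) :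
    smulInftyCLM 𝕜 E p c x i = c i • x i := rfl

end SMulInfty

def inftyEvalRingHom (i : ι) : lp (fun _ : ι => ℝ) ∞ →+* ℝ where
  toFun c := c i
  map_one' := rfl
  map_mul' _ _ := rfl
  map_zero' := rfl
  map_add' _ _ := rfl

lemma infty_exp_apply (c : lp (fun _ : ι => ℝ) ∞) (i : ι) :
    NormedSpace.exp c i = Real.exp (c i) := by
  rw [Real.exp_eq_exp_ℝ]
  exact NormedSpace.map_exp (inftyEvalRingHom i) (lp.evalCLM ℝ (fun _ : ι => ℝ) ∞ i).continuous c

lemma coeFn_eq_of_hasDerivWithinAt {E : ι → Type*} [∀ i, NormedAddCommGroup (E i)]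
    [∀ i, NormedSpace ℝ (E i)] {p : ℝ≥0∞} [Fact (1 ≤ p)] {u : ℝ → lp E p} {u' : lp E p}
    {s : Set ℝ} {t : ℝ} {F : ∀ i, E i} (hu : HasDerivWithinAt u u' s t)
    (hs : UniqueDiffWithinAt ℝ s t) (hF : ∀ i, HasDerivWithinAt (fun r => u r i) (F i) s t) :
    ⇑u' = F :=
  funext fun i => hs.eq_deriv s ((lp.evalCLM ℝ E p i).hasFDerivAt.comp_hasDerivWithinAt t hu) (hF i)

section Hilbert

variable {G : ι → Type*} [∀ i, NormedAddCommGroup (G i)] [∀ i, InnerProductSpace ℝ (G i)]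

lemma hasSum_norm_sq (x : lp G 2) : HasSum (fun i => ‖x i‖ ^ 2) (‖x‖ ^ 2) := by
  simpa only [real_inner_self_eq_norm_sq] using lp.hasSum_inner (𝕜 := ℝ) x x

lemma sum_norm_sq_comp_le {α : Type*} (x : lp G 2) {g : α → ι} (hg : Function.Injective g)
    (s : Finset α) : ∑ a ∈ s, ‖x (g a)‖ ^ 2 ≤ ‖x‖ ^ 2 :=
  calc ∑ a ∈ s, ‖x (g a)‖ ^ 2 = ∑ i ∈ s.map ⟨g, hg⟩, ‖x i‖ ^ 2 :=
        (Finset.sum_map s ⟨g, hg⟩ fun i => ‖x i‖ ^ 2).symm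
    _ ≤ ‖x‖ ^ 2 := sum_le_hasSum _ (fun _ _ => sq_nonneg _) (hasSum_norm_sq x)

end Hilbert

end lp

open Complex in
lemma re_conj_mul_I_mul_pair_le (a b : ℂ) {r : ℝ} (hr : 1 ≤ r) :
    (conj a * (I * ((r⁻¹ : ℝ) * b))).re + (conj b * (I * ((r : ℂ) * a))).re
      ≤ r / 2 * (‖a‖ ^ 2 + ‖b‖ ^ 2) := by
  have hz : |(conj a * b).im| ≤ ‖a‖ * ‖b‖ := by
    simpa using abs_im_le_norm (conj a * b)
  have hsum : (conj a * (I * ((r⁻¹ : ℝ) * b))).re + (conj b * (I * ((r : ℂ) * a))).re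
      = (r - r⁻¹) * (conj a * b).im := by
    simp only [mul_re, mul_im, conj_re, conj_im, I_re, I_im, ofReal_re, ofReal_im]
    ring
  have hr_inv : 0 < r⁻¹ := by positivity
  have hrr : r⁻¹ ≤ r := (inv_le_one_of_one_le₀ hr).trans hr
  rw [hsum]
  nlinarith [abs_le.1 hz, sq_nonneg (‖a‖ - ‖b‖), norm_nonneg a, norm_nonneg b]

lemma abs_re_conj_mul_I_mul_le (a b : ℂ) (s : ℝ) :
    |(conj a * (I * (s * b))).re| ≤ |s| * (‖a‖ ^ 2 + ‖b‖ ^ 2) := by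
  calc |(conj a * (I * (s * b))).re| ≤ ‖conj a * (I * (s * b))‖ := Complex.abs_re_le_norm _
    _ = |s| * (‖a‖ * ‖b‖) := by simp; ring
    _ ≤ |s| * (‖a‖ ^ 2 + ‖b‖ ^ 2) := by
        gcongr; nlinarith [sq_nonneg (‖a‖ - ‖b‖), norm_nonneg a, norm_nonneg b]

lemma Summable.comp_add_right {f : ℤ → ℝ} (hf : Summable f) (k : ℤ) :
    Summable fun n => f (n + k) :=
  (Equiv.addRight k).summable_iff.2 hf

/-- The hopping part `i (y(n+1) + y(n-1))` of the discrete Laplacian, conjugated by a weight `c`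
with ratios `r n = c (n + 1) / c n`. -/
def conjHopping (r : ℤ → ℝ) (y : ℤ → ℂ) (n : ℤ) : ℂ :=
  I * (((r n)⁻¹ : ℝ) * y (n + 1) + (r (n - 1) : ℂ) * y (n - 1))

section Hopping

variable {r : ℤ → ℝ} {y : ℤ → ℂ} {R : ℝ}

lemma summable_mul_norm_sq_comp_add (hy : Summable fun n => ‖y n‖ ^ 2) {s : ℤ → ℝ}
    (hs0 : ∀ n, 0 ≤ s n) (hsR : ∀ n, s n ≤ R) (k : ℤ) :
    Summable fun n => s n * ‖y (n + k)‖ ^ 2 :=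
  ((hy.comp_add_right k).mul_left R).of_nonneg_of_le (fun n => mul_nonneg (hs0 n) (sq_nonneg _))
    fun n => mul_le_mul_of_nonneg_right (hsR n) (sq_nonneg _)

lemma summable_re_conj_mul_I_mul (hy : Summable fun n => ‖y n‖ ^ 2) (k : ℤ) {s : ℤ → ℝ}
    (hs : ∀ n, |s n| ≤ R) : Summable fun n => (conj (y n) * (I * (s n * y (n + k)))).re :=
  ((hy.add (hy.comp_add_right k)).mul_left R).of_norm_bounded fun n =>
    (abs_re_conj_mul_I_mul_le _ _ _).trans (mul_le_mul_of_nonneg_right (hs n) (by positivity))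

variable (hy : Summable fun n => ‖y n‖ ^ 2) (hr1 : ∀ n, 1 ≤ r n) (hrR : ∀ n, r n ≤ R)
include hy hr1 hrR

lemma summable_re_conj_mul_I_mul_inv :
    Summable fun n => (conj (y n) * (I * (((r n)⁻¹ : ℝ) * y (n + 1)))).re :=
  summable_re_conj_mul_I_mul hy 1 fun n => by
    rw [abs_of_pos (inv_pos.2 (by linarith [hr1 n]))]
    exact (inv_le_one_of_one_le₀ (hr1 n)).trans ((hr1 n).trans (hrR n))

lemma summable_re_conj_mul_I_mul_pred :
    Summable fun n => (conj (y n) * (I * ((r (n - 1) : ℂ) * y (n - 1)))).re := by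
  simpa only [sub_eq_add_neg] using summable_re_conj_mul_I_mul hy (-1) (s := fun n => r (n - 1))
    fun n => by rw [abs_of_pos (by linarith [hr1 (n - 1)])]; exact hrR _

theorem summable_re_conj_mul_conjHopping :
    Summable fun n => (conj (y n) * conjHopping r y n).re := by
  simpa only [conjHopping, mul_add, Complex.add_re] using
    (summable_re_conj_mul_I_mul_inv hy hr1 hrR).add (summable_re_conj_mul_I_mul_pred hy hr1 hrR)

/-- Summation by parts over the bonds `(n, n + 1)`. -/
theorem tsum_re_conj_mul_conjHopping_le :
    ∑' n, 2 * (conj (y n) * conjHopping r y n).re ≤ ∑' n, (r n + r (n - 1)) * ‖y n‖ ^ 2 := by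
  set F : ℤ → ℝ := fun n => (conj (y n) * (I * (((r n)⁻¹ : ℝ) * y (n + 1)))).re
  set G : ℤ → ℝ := fun n => (conj (y n) * (I * ((r (n - 1) : ℂ) * y (n - 1)))).re
  have hF : Summable F := summable_re_conj_mul_I_mul_inv hy hr1 hrR
  have hG : Summable G := summable_re_conj_mul_I_mul_pred hy hr1 hrR
  have hr0 : ∀ n, 0 ≤ r n := fun n => zero_le_one.trans (hr1 n)
  have hry : Summable fun n => r n * ‖y n‖ ^ 2 := by
    simpa using summable_mul_norm_sq_comp_add hy hr0 hrR 0
  have hry₁ := summable_mul_norm_sq_comp_add hy hr0 hrR 1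
  have hryPred : Summable fun n => r (n - 1) * ‖y n‖ ^ 2 := by
    simpa using summable_mul_norm_sq_comp_add hy (s := fun n => r (n - 1)) (fun n => hr0 _)
      (fun n => hrR _) 0
  have hpair : ∀ n, F n + G (n + 1) ≤ r n / 2 * (‖y n‖ ^ 2 + ‖y (n + 1)‖ ^ 2) := fun n => by
    simpa only [F, G, add_sub_cancel_right] using
      re_conj_mul_I_mul_pair_le (y n) (y (n + 1)) (hr1 n)
  have hshift : ∑' n, r n * ‖y (n + 1)‖ ^ 2 = ∑' n, r (n - 1) * ‖y n‖ ^ 2 := by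
    rw [← (Equiv.subRight (1 : ℤ)).tsum_eq]
    simp only [Equiv.subRight_apply, sub_add_cancel]
  calc ∑' n, 2 * (conj (y n) * conjHopping r y n).re
      = 2 * (∑' n, F n + ∑' n, G (n + 1)) := by
        rw [show ∑' n, G (n + 1) = ∑' n, G n from (Equiv.addRight (1 : ℤ)).tsum_eq G,
          ← hF.tsum_add hG, ← tsum_mul_left]
        simp only [conjHopping, mul_add, Complex.add_re, F, G]
    _ = 2 * ∑' n, (F n + G (n + 1)) := by rw [hF.tsum_add (hG.comp_add_right 1)]
    _ ≤ 2 * ∑' n, r n / 2 * (‖y n‖ ^ 2 + ‖y (n + 1)‖ ^ 2) := by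
        refine mul_le_mul_of_nonneg_left
          ((hF.add (hG.comp_add_right 1)).tsum_le_tsum hpair ?_) zero_le_two
        simpa only [mul_add, div_eq_mul_inv, mul_right_comm _ (2⁻¹ : ℝ)] using
          (hry.add hry₁).mul_right 2⁻¹
    _ = ∑' n, r n * ‖y n‖ ^ 2 + ∑' n, r n * ‖y (n + 1)‖ ^ 2 := by
        rw [← tsum_mul_left, ← hry.tsum_add hry₁]
        congr 1; ext n; ring
    _ = ∑' n, (r n + r (n - 1)) * ‖y n‖ ^ 2 := by
        rw [hshift, ← hry.tsum_add hryPred]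
        simp only [add_mul]

theorem tsum_two_mul_re_conj_mul_conjHopping_sub_le {w : ℤ → ℝ} {W L : ℝ}
    (hw : ∀ n, |w n| ≤ W) (hL : ∀ n, r n + r (n - 1) - w n ≤ L) :
    ∑' n, (2 * (conj (y n) * conjHopping r y n).re - w n * ‖y n‖ ^ 2)
      ≤ L * ∑' n, ‖y n‖ ^ 2 := by
  have hH := (summable_re_conj_mul_conjHopping hy hr1 hrR).mul_left 2
  have hW : Summable fun n => w n * ‖y n‖ ^ 2 := (hy.mul_left W).of_norm_bounded fun n => by
    rw [norm_mul, norm_pow, norm_norm, Real.norm_eq_abs]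
    exact mul_le_mul_of_nonneg_right (hw n) (sq_nonneg _)
  have hRY : Summable fun n => (r n + r (n - 1)) * ‖y n‖ ^ 2 := by
    simpa using summable_mul_norm_sq_comp_add hy (s := fun n => r n + r (n - 1)) (R := 2 * R)
      (fun n => by linarith [hr1 n, hr1 (n - 1)]) (fun n => by linarith [hrR n, hrR (n - 1)]) 0
  rw [hH.tsum_sub hW, ← tsum_mul_left]
  calc ∑' n, 2 * (conj (y n) * conjHopping r y n).re - ∑' n, w n * ‖y n‖ ^ 2
      ≤ ∑' n, (r n + r (n - 1)) * ‖y n‖ ^ 2 - ∑' n, w n * ‖y n‖ ^ 2 :=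
        sub_le_sub_right (tsum_re_conj_mul_conjHopping_le hy hr1 hrR) _
    _ = ∑' n, ((r n + r (n - 1)) * ‖y n‖ ^ 2 - w n * ‖y n‖ ^ 2) := (hRY.tsum_sub hW).symm
    _ ≤ ∑' n, L * ‖y n‖ ^ 2 := (hRY.sub hW).tsum_le_tsum (fun n => by
        rw [← sub_mul]; exact mul_le_mul_of_nonneg_right (hL n) (sq_nonneg _)) (hy.mul_left L)

end Hopping

def schrodingerRHS (V₁ V₂ : ℤ → ℝ) (x : ℤ → ℂ) (n : ℤ) : ℂ :=
  I * (x (n + 1) + x (n - 1) - 2 * x n + ((V₁ n : ℂ) + I * (V₂ n : ℂ)) * x n)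

open Complex in
lemma inner_mul_schrodingerRHS_sub {c : ℤ → ℝ} (hc : ∀ n, 0 < c n) (V₁ V₂ θ : ℤ → ℝ)
    (x : ℤ → ℂ) (n : ℤ) :
    inner ℝ ((c n : ℂ) * x n) (c n * schrodingerRHS V₁ V₂ x n - ((c n * θ n / 2 : ℝ) : ℂ) * x n)
      = (conj ((c n : ℂ) * x n) *
          conjHopping (fun m => c (m + 1) / c m) (fun m => c m * x m) n).re
        - (V₂ n + θ n / 2) * ‖(c n : ℂ) * x n‖ ^ 2 := by
  have h₁ : (((c (n + 1) / c n)⁻¹ : ℝ) : ℂ) * (c (n + 1) * x (n + 1)) = c n * x (n + 1) := by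
    have : (c (n + 1) : ℂ) ≠ 0 := ofReal_ne_zero.2 (hc _).ne'
    push_cast; field_simp
  have h₂ : ((c (n - 1 + 1) / c (n - 1) : ℝ) : ℂ) * (c (n - 1) * x (n - 1)) = c n * x (n - 1) := by
    have : (c (n - 1) : ℂ) ≠ 0 := ofReal_ne_zero.2 (hc _).ne'
    rw [sub_add_cancel]; push_cast; field_simp
  simp only [conjHopping, h₁, h₂]
  rw [Complex.inner, ← normSq_eq_norm_sq, normSq_apply]
  simp only [schrodingerRHS, mul_re, mul_im, conj_re, conj_im, I_re, I_im, ofReal_re, ofReal_im,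
    add_re, add_im, sub_re, sub_im]
  norm_num
  ring

/-- At `s = 1 - t / 2` the left side is `d/dt ‖weightedSol θ u t‖ ^ 2`
(see `hasDerivWithinAt_weightedSol`). -/
theorem two_mul_inner_smulInfty_le {θ : ℓ^∞} (hθ : Monotone θ) {K : ℝ}
    (hK : ∀ n, exp (θ (n + 1) - θ n) + exp (θ n - θ (n - 1)) ≤ θ n + K)
    {M : ℝ} {V₁ V₂ : ℤ → ℝ} (hV₂ : ∀ n, |V₂ n| ≤ M) {x d : ℓ²}
    (hd : ⇑d = schrodingerRHS V₁ V₂ x) {s : ℝ} (hs0 : 0 ≤ s) (hs1 : s ≤ 1) :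
    let B := lp.smulInftyCLM ℝ (fun _ : ℤ => ℂ) 2
    2 * inner ℝ (B (NormedSpace.exp (s • θ)) x)
        (B (NormedSpace.exp (s • θ)) d + B ((-(1 / 2) : ℝ) • (NormedSpace.exp (s • θ) * θ)) x)
      ≤ (K + 2 * M) * ‖B (NormedSpace.exp (s • θ)) x‖ ^ 2 := by
  intro B
  set c : ℤ → ℝ := fun n => exp (s * θ n)
  set y := B (NormedSpace.exp (s • θ)) x
  set y' := B (NormedSpace.exp (s • θ)) d + B ((-(1 / 2) : ℝ) • (NormedSpace.exp (s • θ) * θ)) x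
  have hy : ⇑y = fun n => (c n : ℂ) * x n := funext fun n => by
    simp only [y, B, lp.smulInftyCLM_apply, lp.infty_exp_apply, lp.coeFn_smul, Pi.smul_apply,
      smul_eq_mul, Complex.real_smul, c]
  have hy' : ∀ n, y' n = c n * schrodingerRHS V₁ V₂ x n - ((c n * θ n / 2 : ℝ) : ℂ) * x n :=
    fun n => by
    simp only [y', lp.coeFn_add, Pi.add_apply, B, lp.smulInftyCLM_apply, lp.coeFn_smul,
      Pi.smul_apply, lp.infty_coeFn_mul, Pi.mul_apply, lp.infty_exp_apply, hd, smul_eq_mul,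
      Complex.real_smul, c]
    push_cast
    ring
  set r : ℤ → ℝ := fun n => c (n + 1) / c n
  have hr : ∀ n, r n = exp (s * (θ (n + 1) - θ n)) := fun n => by
    simp only [r, c, ← exp_sub, mul_sub]
  have hr1 : ∀ n, 1 ≤ r n := fun n => by
    rw [hr]; exact one_le_exp (mul_nonneg hs0 (sub_nonneg.2 (hθ (by omega))))
  have hrK : ∀ n, r n ≤ exp (θ (n + 1) - θ n) := fun n => by
    rw [hr]
    exact exp_le_exp.2 (mul_le_of_le_one_left (sub_nonneg.2 (hθ (by omega))) hs1)
  have hθb : ∀ n, |θ n| ≤ ‖θ‖ := fun n => lp.norm_apply_le_norm ENNReal.top_ne_zero θ n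
  have hrR : ∀ n, r n ≤ exp (2 * ‖θ‖) := fun n =>
    (hrK n).trans (exp_le_exp.2 (by linarith [abs_le.1 (hθb n), abs_le.1 (hθb (n + 1))]))
  have hcoord : ∀ n, inner ℝ (y n) (y' n)
      = (conj (y n) * conjHopping r y n).re - (V₂ n + θ n / 2) * ‖y n‖ ^ 2 := fun n => by
    rw [hy' n, hy]
    exact inner_mul_schrodingerRHS_sub (c := c) (fun n => exp_pos _) V₁ V₂ θ x n
  have hL : ∀ n, r n + r (n - 1) - (2 * V₂ n + θ n) ≤ K + 2 * M := fun n => by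
    have h₁ := hrK (n - 1)
    rw [sub_add_cancel] at h₁
    linarith [hrK n, hK n, neg_abs_le (V₂ n), hV₂ n]
  have hw : ∀ n, |2 * V₂ n + θ n| ≤ 2 * M + ‖θ‖ := fun n =>
    (abs_add_le _ _).trans (by rw [abs_mul, abs_two]; linarith [hV₂ n, hθb n])
  calc 2 * inner ℝ y y'
      = ∑' n, (2 * (conj (y n) * conjHopping r y n).re - (2 * V₂ n + θ n) * ‖y n‖ ^ 2) := by
        rw [← (lp.hasSum_inner (𝕜 := ℝ) y y').tsum_eq, ← tsum_mul_left]
        congr 1; ext n; rw [hcoord]; ring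
    _ ≤ (K + 2 * M) * ∑' n, ‖y n‖ ^ 2 := tsum_two_mul_re_conj_mul_conjHopping_sub_le
        (lp.hasSum_norm_sq y).summable hr1 hrR hw hL
    _ = (K + 2 * M) * ‖y‖ ^ 2 := by rw [(lp.hasSum_norm_sq y).tsum_eq]

theorem le_mul_exp_of_hasDerivWithinAt_le {f f' : ℝ → ℝ} {a b K : ℝ}
    (hf : ∀ t ∈ Icc a b, HasDerivWithinAt f (f' t) (Icc a b) t)
    (hf' : ∀ t ∈ Icc a b, f' t ≤ K * f t) :
    ∀ t ∈ Icc a b, f t ≤ f a * exp (K * (t - a)) := by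
  intro t ht
  have := le_gronwallBound_of_liminf_deriv_right_le (δ := f a) (ε := 0)
    (fun t ht => (hf t ht).continuousWithinAt)
    (fun x hx r hr => ((hf x (Ico_subset_Icc_self hx)).mono_of_mem_nhdsWithin
      (Icc_mem_nhdsGE_of_mem hx)).liminf_right_slope_le hr)
    le_rfl (fun x hx => by simpa using hf' x (Ico_subset_Icc_self hx)) t ht
  rwa [gronwallBound_ε0] at this

def weightedSol (θ : ℓ^∞) (u : ℝ → ℓ²) (t : ℝ) : ℓ² :=
  lp.smulInftyCLM ℝ (fun _ : ℤ => ℂ) 2 (NormedSpace.exp ((1 - t / 2) • θ)) (u t)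

lemma weightedSol_apply (θ : ℓ^∞) (u : ℝ → ℓ²) (t : ℝ) (n : ℤ) :
    weightedSol θ u t n = (exp ((1 - t / 2) * θ n) : ℂ) * u t n := by
  simp only [weightedSol, lp.smulInftyCLM_apply, lp.infty_exp_apply, lp.coeFn_smul, Pi.smul_apply,
    smul_eq_mul, Complex.real_smul]

lemma hasDerivAt_exp_smul (θ : ℓ^∞) (t : ℝ) :
    HasDerivAt (fun t : ℝ => NormedSpace.exp ((1 - t / 2) • θ))
      ((-(1 / 2) : ℝ) • (NormedSpace.exp ((1 - t / 2) • θ) * θ)) t := by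
  have h : HasDerivAt (fun t : ℝ => 1 - t / 2) (-(1 / 2)) t := by
    simpa using ((hasDerivAt_id t).div_const 2).const_sub 1
  exact (hasDerivAt_exp_smul_const θ (1 - t / 2)).scomp t h

lemma hasDerivWithinAt_weightedSol (θ : ℓ^∞) {u : ℝ → ℓ²} {u' : ℓ²} {s : Set ℝ} {t : ℝ}
    (hu : HasDerivWithinAt u u' s t) :
    HasDerivWithinAt (weightedSol θ u)
      (lp.smulInftyCLM ℝ (fun _ : ℤ => ℂ) 2 (NormedSpace.exp ((1 - t / 2) • θ)) u'
        + lp.smulInftyCLM ℝ (fun _ : ℤ => ℂ) 2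
          ((-(1 / 2) : ℝ) • (NormedSpace.exp ((1 - t / 2) • θ) * θ)) (u t)) s t :=
  (lp.smulInftyCLM ℝ (fun _ : ℤ => ℂ) 2).hasDerivWithinAt_of_bilinear
    (hasDerivAt_exp_smul θ t).hasDerivWithinAt hu

theorem norm_sq_weightedSol_le {θ : ℓ^∞} (hθ : Monotone θ) {K : ℝ}
    (hK : ∀ n, exp (θ (n + 1) - θ n) + exp (θ n - θ (n - 1)) ≤ θ n + K)
    {M : ℝ} {V₁ V₂ : ℝ → ℤ → ℝ} (hV₂ : ∀ t n, |V₂ t n| ≤ M) {u D : ℝ → ℓ²}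
    (hu : ∀ t ∈ Icc (0 : ℝ) 1, HasDerivWithinAt u (D t) (Icc 0 1) t)
    (hD : ∀ t ∈ Icc (0 : ℝ) 1, ⇑(D t) = schrodingerRHS (V₁ t) (V₂ t) (u t)) :
    ∀ t ∈ Icc (0 : ℝ) 1,
      ‖weightedSol θ u t‖ ^ 2 ≤ ‖weightedSol θ u 0‖ ^ 2 * exp ((K + 2 * M) * t) := by
  simpa using le_mul_exp_of_hasDerivWithinAt_le (f := fun t => ‖weightedSol θ u t‖ ^ 2)
    (fun t ht => (hasDerivWithinAt_weightedSol θ (hu t ht)).norm_sq)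
    fun t ht => two_mul_inner_smulInfty_le hθ hK (hV₂ t) (hD t ht) (by linarith [ht.2])
      (by linarith [ht.1])

lemma add_one_rpow_eq_exp_mulLogNat (β : ℝ) (k : ℕ) :
    ((k : ℝ) + 1) ^ (β * ((k : ℝ) + 1)) = exp (β * mulLogNat (k + 1)) := by
  rw [rpow_def_of_pos (by positivity), mulLogNat]
  push_cast
  ring_nf

lemma summable_exp_mulLogNat_toNat_mul {f : ℤ → ℝ} (hf : Summable f) {β : ℝ}
    (h : Summable fun k : ℕ => ((k : ℝ) + 1) ^ (β * ((k : ℝ) + 1)) * f (k + 1)) :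
    Summable fun n : ℤ => exp (β * mulLogNat n.toNat) * f n := by
  refine .of_nat_of_neg_add_one ((summable_nat_add_iff 1).1 ?_) ?_
  · refine h.congr fun k => ?_
    rw [add_one_rpow_eq_exp_mulLogNat]
    simp
  · have hinj : Function.Injective fun k : ℕ => -((k : ℤ) + 1) := fun a b hab => by
      simp only [neg_inj] at hab; omega
    refine (hf.comp_injective hinj).congr fun k => ?_
    rw [Function.comp_apply, show (-((k : ℤ) + 1)).toNat = 0 by omega]
    simp [mulLogNat]

lemma norm_weightedSol_apply (θ : ℓ^∞) (u : ℝ → ℓ²) (t : ℝ) (n : ℤ) :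
    ‖weightedSol θ u t n‖ = exp ((1 - t / 2) * θ n) * ‖u t n‖ := by
  rw [weightedSol_apply, norm_mul, Complex.norm_real, Real.norm_of_nonneg (exp_pos _).le]

lemma norm_weightedSol_cappedExponent_zero_apply_le {α : ℝ} (hα : 0 ≤ α) (N : ℕ)
    (u : ℝ → ℓ²) (n : ℤ) :
    ‖weightedSol (cappedExponent α N) u 0 n‖ ≤ exp (α * mulLogNat n.toNat) * ‖u 0 n‖ := by
  rw [norm_weightedSol_apply]
  refine mul_le_mul_of_nonneg_right (exp_le_exp.2 ?_) (norm_nonneg _)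
  simpa only [zero_div, sub_zero, one_mul, cappedExponent_apply] using
    mul_le_mul_of_nonneg_left (cappedMulLog_le_mulLogNat_toNat N n) hα

lemma add_one_rpow_mul_norm_sq_le {α : ℝ} (hα : 0 ≤ α) {N n : ℕ} (hn : n < N) (u : ℝ → ℓ²)
    {t : ℝ} (ht : t ≤ 1) :
    ((n : ℝ) + 1) ^ (α * ((n : ℝ) + 1)) * ‖u t (n + 1)‖ ^ 2
      ≤ ‖weightedSol (cappedExponent α N) u t (n + 1)‖ ^ 2 := by
  have hθ : cappedExponent α N ((n : ℤ) + 1) = α * mulLogNat (n + 1) := by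
    simpa only [cappedExponent_apply, Nat.cast_succ] using
      congrArg (α * ·) (cappedMulLog_natCast hn)
  rw [norm_weightedSol_apply, mul_pow, ← exp_nat_mul, hθ, add_one_rpow_eq_exp_mulLogNat]
  refine mul_le_mul_of_nonneg_right (exp_le_exp.2 ?_) (sq_nonneg _)
  push_cast
  nlinarith [mul_nonneg hα (mulLogNat_nonneg (n + 1))]

lemma memℓp_exp_mulLogNat_mul {α : ℝ} (x : ℓ²)
    (h : Summable fun k : ℕ => ((k : ℝ) + 1) ^ (2 * α * ((k : ℝ) + 1)) * ‖x (k + 1)‖ ^ 2) :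
    Memℓp (fun n => (exp (α * mulLogNat n.toNat) : ℂ) * x n) 2 := by
  refine memℓp_gen ((summable_exp_mulLogNat_toNat_mul (lp.hasSum_norm_sq x).summable h).congr
    fun n => ?_)
  rw [ENNReal.toReal_ofNat, Real.rpow_two, norm_mul, Complex.norm_real,
    Real.norm_of_nonneg (exp_pos _).le, mul_pow, ← exp_nat_mul]
  push_cast
  ring_nf

lemma natCast_add_one_injective : Function.Injective fun n : ℕ => (n : ℤ) + 1 := fun a b h => by
  simpa using h

theorem exists_forall_sum_range_rpow_mul_norm_sq_le {α M : ℝ} (hα0 : 0 < α) (hα : α ≤ 1)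
    {V₁ V₂ : ℝ → ℤ → ℝ} (hV₂ : ∀ t n, |V₂ t n| ≤ M) {u D : ℝ → ℓ²}
    (hu : ∀ t ∈ Icc (0 : ℝ) 1, HasDerivWithinAt u (D t) (Icc 0 1) t)
    (hD : ∀ t ∈ Icc (0 : ℝ) 1, ⇑(D t) = schrodingerRHS (V₁ t) (V₂ t) (u t))
    (h0 : Summable fun k : ℕ => ((k : ℝ) + 1) ^ (2 * α * ((k : ℝ) + 1)) * ‖u 0 (k + 1)‖ ^ 2)
    {t : ℝ} (ht : t ∈ Icc (0 : ℝ) 1) :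
    ∃ C, ∀ N, ∑ n ∈ Finset.range N, ((n : ℝ) + 1) ^ (α * ((n : ℝ) + 1)) * ‖u t (n + 1)‖ ^ 2
      ≤ C := by
  obtain ⟨K, hK⟩ := exists_exp_mulLogNat_sub_add_le hα0 hα
  have hKM : 0 ≤ K + 2 * M := by
    have hK0 : 2 ≤ K := by simpa [mulLogNat, one_add_one_eq_two] using hK 0
    linarith [(abs_nonneg _).trans (hV₂ 0 0)]
  let U : ℓ² := ⟨_, memℓp_exp_mulLogNat_mul (u 0) h0⟩
  refine ⟨‖U‖ ^ 2 * exp (K + 2 * M), fun N => ?_⟩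
  set θ := cappedExponent α N
  have hθ : Monotone θ := fun a b h => mul_le_mul_of_nonneg_left (cappedMulLog_mono N h) hα0.le
  have hKθ : ∀ n, exp (θ (n + 1) - θ n) + exp (θ n - θ (n - 1)) ≤ θ n + K := fun n => by
    simpa only [θ, cappedExponent_apply, mul_sub] using exp_cappedMulLog_sub_add_le hα0.le hK N n
  have hinit : ‖weightedSol θ u 0‖ ≤ ‖U‖ := lp.norm_mono two_ne_zero fun n =>
    (norm_weightedSol_cappedExponent_zero_apply_le hα0.le N u n).trans_eq
      (by
        change _ = ‖(exp (α * mulLogNat n.toNat) : ℂ) * u 0 n‖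
        rw [norm_mul, Complex.norm_real, Real.norm_of_nonneg (exp_pos _).le])
  calc ∑ n ∈ Finset.range N, ((n : ℝ) + 1) ^ (α * ((n : ℝ) + 1)) * ‖u t (n + 1)‖ ^ 2
      ≤ ∑ n ∈ Finset.range N, ‖weightedSol θ u t (n + 1)‖ ^ 2 := Finset.sum_le_sum fun n hn =>
        add_one_rpow_mul_norm_sq_le hα0.le (Finset.mem_range.1 hn) u ht.2
    _ ≤ ‖weightedSol θ u t‖ ^ 2 := lp.sum_norm_sq_comp_le _ natCast_add_one_injective _
    _ ≤ ‖weightedSol θ u 0‖ ^ 2 * exp ((K + 2 * M) * t) :=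
        norm_sq_weightedSol_le hθ hKθ hV₂ hu hD t ht
    _ ≤ ‖U‖ ^ 2 * exp (K + 2 * M) := by
        gcongr
        nlinarith [ht.2, hKM]

/-- If `u ∈ C¹([0,1], ℓ²(ℤ))` solves `∂_t u = i(Δ_d u + Vu)` with
`V = V₁ + iV₂`, `V₂` bounded, and `Σ_{n>0} n^{2αn}|u(0,n)|² < ∞` for some `α ≤ 1`, then for
each `t ∈ [0,1]` one has `Σ_{n>0} n^{αn}|u(t,n)|² < ∞`. -/
theorem one_sided_weight_propagation
    (α M : ℝ) (hα : α ≤ 1)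
    (V₁ V₂ : ℝ → ℤ → ℝ) (hV₂ : ∀ t n, |V₂ t n| ≤ M)
    (u : ℝ → lp (fun _ : ℤ => ℂ) 2)
    (hC1 : ContDiffOn ℝ 1 u (Set.Icc 0 1))
    (heq : ∀ t ∈ Set.Icc (0 : ℝ) 1, ∀ n : ℤ,
      HasDerivWithinAt (fun s : ℝ => u s n)
        (Complex.I * (u t (n + 1) + u t (n - 1) - 2 * u t n
          + ((V₁ t n : ℂ) + Complex.I * (V₂ t n : ℂ)) * u t n))
        (Set.Icc 0 1) t)
    (h0 : ∑' n : ℕ, ENNReal.ofReal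
        (((n : ℝ) + 1) ^ (2 * α * ((n : ℝ) + 1)) * ‖u 0 ((n : ℤ) + 1)‖ ^ 2) < ⊤) :
    ∀ t ∈ Set.Icc (0 : ℝ) 1,
      ∑' n : ℕ, ENNReal.ofReal
        (((n : ℝ) + 1) ^ (α * ((n : ℝ) + 1)) * ‖u t ((n : ℤ) + 1)‖ ^ 2) < ⊤ := by
  intro t ht
  have hu : ∀ t ∈ Icc (0 : ℝ) 1, HasDerivWithinAt u (derivWithin u (Icc 0 1) t) (Icc 0 1) t :=
    fun t ht => ((hC1.differentiableOn one_ne_zero) t ht).hasDerivWithinAt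
  have hD : ∀ t ∈ Icc (0 : ℝ) 1,
      ⇑(derivWithin u (Icc 0 1) t) = schrodingerRHS (V₁ t) (V₂ t) (u t) := fun t ht =>
    lp.coeFn_eq_of_hasDerivWithinAt (hu t ht) (uniqueDiffOn_Icc zero_lt_one t ht) (heq t ht)
  have h0' := (ENNReal.summable_toReal h0.ne).congr fun n =>
    ENNReal.toReal_ofReal (by positivity)
  obtain ⟨C, hC⟩ : ∃ C, ∀ N, ∑ n ∈ Finset.range N,
      ((n : ℝ) + 1) ^ (α * ((n : ℝ) + 1)) * ‖u t ((n : ℤ) + 1)‖ ^ 2 ≤ C := by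
    rcases le_or_gt α 0 with hα0 | hα0
    · refine ⟨‖u t‖ ^ 2, fun N => (Finset.sum_le_sum fun n _ => ?_).trans
        (lp.sum_norm_sq_comp_le (u t) natCast_add_one_injective _)⟩
      refine mul_le_of_le_one_left (sq_nonneg _) (rpow_le_one_of_one_le_of_nonpos ?_ ?_)
      · linarith [n.cast_nonneg (α := ℝ)]
      · exact mul_nonpos_of_nonpos_of_nonneg hα0 (by positivity)
    · exact exists_forall_sum_range_rpow_mul_norm_sq_le hα0 hα hV₂ hu hD h0' ht
  exact (summable_of_sum_range_le (fun n => by positivity) hC).tsum_ofReal_lt_top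
end
end

section
/- Let 0 < α ≤ 1 and define κ(t,n) = α·|n|·ln(1+|n|)/(1+t) and ψ(t,n) = e^{κ(t,n)} for t ∈ [0,1], n ∈ ℤ. Set a(t,n) = ψ(t,n+1)/ψ(t,n) - ψ(t,n)/ψ(t,n+1). Then |a(t,n)| ≤ e^α·(1+|n|)^α for all t ∈ [0,1] and n ∈ ℤ, and there exists a constant C ≥ 0 (depending only on α) such that 2·∂_t κ(t,n) + |a(t,n)| + |a(t,n-1)| ≤ 2C for all t ∈ [0,1] and all n ∈ ℤ. -/
noncomputable section

/-- `κ(t,n) = α·|n|·ln(1+|n|)/(1+t)`. -/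
def kappaE (α t : ℝ) (n : ℤ) : ℝ := α * |(n : ℝ)| * Real.log (1 + |(n : ℝ)|) / (1 + t)

/-- `ψ(t,n) = e^{κ(t,n)}`. -/
def psiE (α t : ℝ) (n : ℤ) : ℝ := Real.exp (kappaE α t n)

/-- `a(t,n) = ψ(t,n+1)/ψ(t,n) - ψ(t,n)/ψ(t,n+1)`. -/
def aE (α t : ℝ) (n : ℤ) : ℝ := psiE α t (n + 1) / psiE α t n - psiE α t n / psiE α t (n + 1)

/-!
Since `a(t,n) = 2 sinh (κ(t,n+1) - κ(t,n))`, it is enough to bound the discrete derivative of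
`x ↦ x log (1 + x)` at `x = |n|`, which is at most `1 + log (1 + |n|)`; this gives
`|a(t,n)| ≤ exp (α (1 + log (1 + |n|))) = e^α (1 + |n|)^α`. For `α ≤ 1` both `|a(t,n)|` and
`|a(t,n-1)|` are then `O(|n|)`, which the term `2 ∂_t κ ≤ -(α/2) |n| log (1 + |n|)` absorbs.
-/

open Real

lemma log_one_add_add_one_le {x : ℝ} (hx : 0 ≤ x) :
    log (1 + (x + 1)) ≤ log (1 + x) + 1 / (1 + x) := by
  have hx1 : 0 < 1 + x := by linarith
  have h := log_le_sub_one_of_pos (by positivity : 0 < (1 + (x + 1)) / (1 + x))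
  rw [log_div (by linarith) hx1.ne'] at h
  have hfrac : (1 + (x + 1)) / (1 + x) - 1 = 1 / (1 + x) := by field_simp; ring
  linarith

lemma mul_log_one_add_add_one_sub_le {x : ℝ} (hx : 0 ≤ x) :
    (x + 1) * log (1 + (x + 1)) - x * log (1 + x) ≤ 1 + log (1 + x) := by
  have h := mul_le_mul_of_nonneg_left (log_one_add_add_one_le hx) (by linarith : 0 ≤ x + 1)
  have hx1 : (x + 1) * (1 / (1 + x)) = 1 := by field_simp; ring
  linarith

lemma mul_log_one_add_le_mul_log_one_add {x y : ℝ} (hx : 0 ≤ x) (hxy : x ≤ y) :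
    x * log (1 + x) ≤ y * log (1 + y) :=
  mul_le_mul hxy (log_le_log (by linarith) (by linarith)) (log_nonneg (by linarith))
    (hx.trans hxy)

lemma abs_mul_log_one_add_sub_le {x y : ℝ} (hx : 0 ≤ x) (hy : 0 ≤ y) (hxy : |x - y| = 1) :
    |x * log (1 + x) - y * log (1 + y)| ≤ 1 + log (1 + y) := by
  rcases abs_eq (zero_le_one' ℝ) |>.mp hxy with h | h
  · obtain rfl : x = y + 1 := by linarith
    rw [abs_of_nonneg (sub_nonneg.mpr (mul_log_one_add_le_mul_log_one_add hy (by linarith)))]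
    exact mul_log_one_add_add_one_sub_le hy
  · obtain rfl : y = x + 1 := by linarith
    rw [abs_sub_comm, abs_of_nonneg
      (sub_nonneg.mpr (mul_log_one_add_le_mul_log_one_add hx (by linarith)))]
    have := log_le_log (by linarith) (by linarith : 1 + x ≤ 1 + (x + 1))
    linarith [mul_log_one_add_add_one_sub_le hx]

lemma abs_abs_intCast_add_one_sub (n : ℤ) : |(|((n + 1 : ℤ) : ℝ)| - |(n : ℝ)|)| = 1 := by
  push_cast
  rcases le_or_gt 0 n with hn | hn
  · have hn' : (0 : ℝ) ≤ n := by exact_mod_cast hn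
    rw [abs_of_nonneg (by linarith : (0 : ℝ) ≤ n + 1), abs_of_nonneg hn']
    norm_num
  · have hn' : (n : ℝ) + 1 ≤ 0 := by exact_mod_cast hn
    rw [abs_of_nonpos hn', abs_of_neg (by linarith : (n : ℝ) < 0)]
    norm_num

lemma abs_kappaE_add_one_sub_le {α t : ℝ} (hα : 0 ≤ α) (ht : 0 ≤ t) (n : ℤ) :
    |kappaE α t (n + 1) - kappaE α t n| ≤ α * (1 + log (1 + |(n : ℝ)|)) := by
  have hdiff : kappaE α t (n + 1) - kappaE α t n = α / (1 + t) *
      (|((n + 1 : ℤ) : ℝ)| * log (1 + |((n + 1 : ℤ) : ℝ)|) - |(n : ℝ)| * log (1 + |(n : ℝ)|)) := by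
    simp only [kappaE]
    ring
  have hcoef : |α / (1 + t)| ≤ α := by
    rw [abs_of_nonneg (by positivity), div_le_iff₀ (by linarith)]
    exact le_mul_of_one_le_right hα (by linarith)
  rw [hdiff, abs_mul]
  exact mul_le_mul hcoef (abs_mul_log_one_add_sub_le (abs_nonneg _) (abs_nonneg _)
    (abs_abs_intCast_add_one_sub n)) (abs_nonneg _) hα

lemma aE_eq_exp_sub_exp_neg (α t : ℝ) (n : ℤ) :
    aE α t n = exp (kappaE α t (n + 1) - kappaE α t n)
      - exp (-(kappaE α t (n + 1) - kappaE α t n)) := by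
  simp only [aE, psiE, ← exp_sub, neg_sub]

lemma abs_exp_sub_exp_neg_le (x : ℝ) : |exp x - exp (-x)| ≤ exp |x| := by
  have h₁ := exp_le_exp.mpr (le_abs_self x)
  have h₂ := exp_le_exp.mpr (neg_le_abs x)
  rw [abs_le]
  constructor <;> linarith [exp_pos x, exp_pos (-x)]

lemma abs_aE_le {α t : ℝ} (hα : 0 ≤ α) (ht : 0 ≤ t) (n : ℤ) :
    |aE α t n| ≤ exp α * (1 + |(n : ℝ)|) ^ α := by
  have hpow : exp α * (1 + |(n : ℝ)|) ^ α = exp (α * (1 + log (1 + |(n : ℝ)|))) := by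
    rw [rpow_def_of_pos (by positivity), ← exp_add]
    ring_nf
  rw [hpow, aE_eq_exp_sub_exp_neg]
  exact (abs_exp_sub_exp_neg_le _).trans (exp_le_exp.mpr (abs_kappaE_add_one_sub_le hα ht n))

lemma exp_mul_rpow_le_exp_one_mul {α x : ℝ} (hα : α ≤ 1) (hx : 0 ≤ x) :
    exp α * (1 + x) ^ α ≤ exp 1 * (1 + x) := by
  have h := rpow_le_rpow_of_exponent_le (by linarith : 1 ≤ 1 + x) hα
  rw [rpow_one] at h
  exact mul_le_mul (exp_le_exp.mpr hα) h (by positivity) (exp_pos 1).le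

lemma mul_sub_mul_mul_log_one_add_le {a c x : ℝ} (ha : 0 < a) (hc : 0 ≤ c) (hx : 0 ≤ x) :
    c * x - a * x * log (1 + x) ≤ c * exp (c / a) := by
  rcases le_or_gt (c / a) (log (1 + x)) with hlog | hlog
  · have : c ≤ a * log (1 + x) := by rwa [div_le_iff₀' ha] at hlog
    nlinarith [exp_pos (c / a)]
  · have : 1 + x < exp (c / a) := by
      rwa [← exp_log (by linarith : 0 < 1 + x), exp_lt_exp]
    have hcx : c * x ≤ c * exp (c / a) := mul_le_mul_of_nonneg_left (by linarith) hc
    have : 0 ≤ a * x * log (1 + x) := by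
      have := log_nonneg (by linarith : 1 ≤ 1 + x)
      positivity
    linarith

lemma two_mul_neg_div_sq_le {A t : ℝ} (hA : 0 ≤ A) (ht : t ∈ Set.Icc (0 : ℝ) 1) :
    2 * (-A / (1 + t) ^ 2) ≤ -(A / 2) := by
  obtain ⟨ht0, ht1⟩ := ht
  have h : A / 4 ≤ A / (1 + t) ^ 2 := div_le_div_of_nonneg_left hA (by positivity) (by nlinarith)
  rw [neg_div]
  linarith

/-- For `0 < α ≤ 1`: `|a(t,n)| ≤ e^α (1+|n|)^α`, and there is `C ≥ 0`
(depending only on `α`) with `2∂_tκ(t,n) + |a(t,n)| + |a(t,n-1)| ≤ 2C` for all `t ∈ [0,1]`,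
`n ∈ ℤ`, where `∂_tκ(t,n) = -α·|n|·ln(1+|n|)/(1+t)²`. -/
theorem weight_coefficient_bounds (α : ℝ) (hα0 : 0 < α) (hα1 : α ≤ 1) :
    (∀ t ∈ Set.Icc (0 : ℝ) 1, ∀ n : ℤ,
      |aE α t n| ≤ Real.exp α * (1 + |(n : ℝ)|) ^ α) ∧
    ∃ C : ℝ, 0 ≤ C ∧ ∀ t ∈ Set.Icc (0 : ℝ) 1, ∀ n : ℤ,
      2 * (-(α * |(n : ℝ)| * Real.log (1 + |(n : ℝ)|)) / (1 + t) ^ 2)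
        + |aE α t n| + |aE α t (n - 1)| ≤ 2 * C := by
  have hlin : ∀ t ∈ Set.Icc (0 : ℝ) 1, ∀ n : ℤ, |aE α t n| ≤ exp 1 * (1 + |(n : ℝ)|) :=
    fun t ht n => (abs_aE_le hα0.le ht.1 n).trans (exp_mul_rpow_le_exp_one_mul hα1 (abs_nonneg _))
  refine ⟨fun t ht n => abs_aE_le hα0.le ht.1 n,
    (3 * exp 1 + 2 * exp 1 * exp (2 * exp 1 / (α / 2))) / 2, by positivity, fun t ht n => ?_⟩
  have hn : |aE α t n| ≤ exp 1 * (1 + |(n : ℝ)|) := hlin t ht n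
  have hn₁ : |aE α t (n - 1)| ≤ exp 1 * (2 + |(n : ℝ)|) := by
    refine (hlin t ht (n - 1)).trans (mul_le_mul_of_nonneg_left ?_ (exp_pos 1).le)
    have h := abs_sub (n : ℝ) 1
    rw [abs_one] at h
    push_cast
    linarith
  have hlog := log_nonneg (by linarith [abs_nonneg (n : ℝ)] : 1 ≤ 1 + |(n : ℝ)|)
  have hderiv := two_mul_neg_div_sq_le
    (by positivity : 0 ≤ α * |(n : ℝ)| * log (1 + |(n : ℝ)|)) ht
  have hbound := mul_sub_mul_mul_log_one_add_le (half_pos hα0)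
    (by positivity : 0 ≤ 2 * exp 1) (abs_nonneg (n : ℝ))
  linarith
end
end

section
/- Let γ > 3/2 and ε > 0. Then there exists a constant C₁ ≥ 0 (depending only on γ and ε) such that for all R₀ ≥ 1 and all M > 0: ε·γ·e^{2γ}·M^{2γ-3} - 4R₀γ(1 + ln M) ≥ -(4γ/(2γ-3))·R₀·ln R₀ - C₁·R₀. -/
open Real

/-- Equality holds at `M^a = B / (a A)`; the bound is `log y ≤ y - 1` at `y = a A M^a / B`. -/
theorem mul_log_sub_mul_rpow_le {A B a M : ℝ} (hA : 0 < A) (hB : 0 < B) (ha : 0 < a)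
    (hM : 0 < M) :
    B * log M - A * M ^ a ≤ B / a * (log (B / (a * A)) - 1) := by
  have hc : 0 < B / (a * A) := by positivity
  have hMa : 0 < M ^ a := rpow_pos_of_pos hM a
  have key := log_le_sub_one_of_pos (div_pos hMa hc)
  rw [log_div hMa.ne' hc.ne', log_rpow hM] at key
  have hscaled := mul_le_mul_of_nonneg_left key (div_pos hB ha).le
  have hrhs : B / a * (M ^ a / (B / (a * A)) - 1) = A * M ^ a - B / a := by
    field_simp
  have hlhs : B / a * (a * log M - log (B / (a * A))) =
      B * log M - B / a * log (B / (a * A)) := by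
    field_simp
  rw [hrhs, hlhs] at hscaled
  linarith

/-- For `γ > 3/2` and `ε > 0` there is `C₁ ≥ 0` (depending only on `γ, ε`)
such that for all `R₀ ≥ 1` and `M > 0`:
`ε γ e^{2γ} M^{2γ-3} - 4R₀γ(1+ln M) ≥ -(4γ/(2γ-3)) R₀ ln R₀ - C₁ R₀`. -/
theorem rho_lower_bound (γ ε : ℝ) (hγ : 3 / 2 < γ) (hε : 0 < ε) :
    ∃ C₁ : ℝ, 0 ≤ C₁ ∧ ∀ R₀ M : ℝ, 1 ≤ R₀ → 0 < M →
      -(4 * γ / (2 * γ - 3)) * R₀ * Real.log R₀ - C₁ * R₀ ≤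
        ε * γ * Real.exp (2 * γ) * M ^ (2 * γ - 3) - 4 * R₀ * γ * (1 + Real.log M) := by
  set a := 2 * γ - 3
  set A := ε * γ * exp (2 * γ)
  have ha : 0 < a := by linarith
  have hγ0 : 0 < γ := by linarith
  have hA : 0 < A := by positivity
  set K := 4 * γ + 4 * γ / a * (log (4 * γ / (a * A)) - 1)
  refine ⟨max K 0, le_max_right K 0, fun R₀ M hR₀ hM => ?_⟩
  have hR₀pos : 0 < R₀ := by linarith
  have hmax := mul_le_mul_of_nonneg_right (le_max_left K 0) hR₀pos.le
  have hbound := mul_log_sub_mul_rpow_le hA (by positivity : 0 < 4 * γ * R₀) ha hM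
  have hlog : log (4 * γ * R₀ / (a * A)) = log R₀ + log (4 * γ / (a * A)) := by
    rw [mul_comm, mul_div_assoc, log_mul hR₀pos.ne' (by positivity)]
  rw [hlog] at hbound
  have hdiv : 4 * γ * R₀ / a = 4 * γ / a * R₀ := by ring
  rw [hdiv] at hbound
  linarith
end

section
/- Let C ≥ 0 and let H : [0,1] → (0,∞) be continuous, twice differentiable on (0,1), and satisfy ∂²_t(log H(t)) ≥ -2C for all t ∈ (0,1). Then for all t ∈ [0,1]: H(t) ≤ e^{Ct(1-t)}·H(0)^{1-t}·H(1)^{t}. -/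
/-!
Adding `C t²` to `log H` absorbs the lower bound `-2C` on its second derivative, so
`log H t + C t²` is convex on `[0,1]`. Comparing it with its chord between `0` and `1` gives
`log H t ≤ C t (1-t) + (1-t) log H 0 + t log H 1`, and exponentiating yields the claim.
-/

open Real Set

theorem convexOn_add_mul_sq_of_deriv2_ge {D : Set ℝ} (hD : Convex ℝ D) {f : ℝ → ℝ} {C : ℝ}
    (hf : ContinuousOn f D) (hf' : DifferentiableOn ℝ f (interior D))
    (hf'' : DifferentiableOn ℝ (deriv f) (interior D))
    (hbound : ∀ x ∈ interior D, -(2 * C) ≤ deriv^[2] f x) :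
    ConvexOn ℝ D fun x => f x + C * x ^ 2 := by
  have hdiff {g : ℝ → ℝ} (hg : DifferentiableOn ℝ g (interior D)) {x : ℝ} (hx : x ∈ interior D) :
      DifferentiableAt ℝ g x :=
    hg.differentiableAt (isOpen_interior.mem_nhds hx)
  refine convexOn_of_hasDerivWithinAt2_nonneg (f' := fun x => deriv f x + C * (2 * x))
    (f'' := fun x => deriv^[2] f x + C * 2) hD (hf.add (by fun_prop)) (fun x hx => ?_)
    (fun x hx => ?_) (fun x hx => by linarith [hbound x hx])
  · exact ((hdiff hf' hx).hasDerivAt.fun_add ((hasDerivAt_pow 2 x).const_mul C |>.congr_deriv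
      (by simp))).hasDerivWithinAt
  · exact ((hdiff hf'' hx).hasDerivAt.fun_add
      (((hasDerivAt_id x).const_mul 2).const_mul C |>.congr_deriv (by ring))).hasDerivWithinAt

theorem le_of_convexOn_add_mul_sq {f : ℝ → ℝ} {C : ℝ}
    (hg : ConvexOn ℝ (Icc 0 1) fun x => f x + C * x ^ 2) {t : ℝ} (ht : t ∈ Icc 0 1) :
    f t ≤ C * t * (1 - t) + (1 - t) * f 0 + t * f 1 := by
  have := hg.2 (left_mem_Icc.2 zero_le_one) (right_mem_Icc.2 zero_le_one) (sub_nonneg.2 ht.2)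
    ht.1 (sub_add_cancel 1 t)
  simp only [smul_eq_mul, mul_zero, mul_one, zero_add] at this
  nlinarith

theorem differentiableOn_deriv_log {H : ℝ → ℝ} {U : Set ℝ} (hU : IsOpen U)
    (hH : DifferentiableOn ℝ H U) (hH' : DifferentiableOn ℝ (deriv H) U)
    (hne : ∀ x ∈ U, H x ≠ 0) :
    DifferentiableOn ℝ (deriv fun x => log (H x)) U :=
  (hH'.div hH hne).congr fun x hx =>
    deriv.log (hH.differentiableAt (hU.mem_nhds hx)) (hne x hx)

theorem log_convexity_interpolation_general
    (C : ℝ) (H : ℝ → ℝ)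
    (hpos : ∀ t ∈ Set.Icc (0 : ℝ) 1, 0 < H t)
    (hcont : ContinuousOn H (Set.Icc 0 1))
    (hdiff : ∀ t ∈ Set.Ioo (0 : ℝ) 1,
      DifferentiableAt ℝ H t ∧ DifferentiableAt ℝ (deriv H) t)
    (hconv : ∀ t ∈ Set.Ioo (0 : ℝ) 1,
      -(2 * C) ≤ deriv (deriv fun s => Real.log (H s)) t) :
    ∀ t ∈ Set.Icc (0 : ℝ) 1,
      H t ≤ Real.exp (C * t * (1 - t)) * H 0 ^ (1 - t) * H 1 ^ t := by
  intro t ht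
  have hne : ∀ s ∈ Icc (0 : ℝ) 1, H s ≠ 0 := fun s hs => (hpos s hs).ne'
  have hH : DifferentiableOn ℝ H (Ioo 0 1) := fun s hs => (hdiff s hs).1.differentiableWithinAt
  have hH' : DifferentiableOn ℝ (deriv H) (Ioo 0 1) := fun s hs =>
    (hdiff s hs).2.differentiableWithinAt
  have hconvex : ConvexOn ℝ (Icc 0 1) fun s => log (H s) + C * s ^ 2 := by
    refine convexOn_add_mul_sq_of_deriv2_ge (convex_Icc 0 1) (hcont.log hne) ?_ ?_ ?_ <;>
      rw [interior_Icc]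
    · exact hH.log fun s hs => hne s (Ioo_subset_Icc_self hs)
    · exact differentiableOn_deriv_log isOpen_Ioo hH hH' fun s hs => hne s (Ioo_subset_Icc_self hs)
    · exact hconv
  calc H t = exp (log (H t)) := (exp_log (hpos t ht)).symm
    _ ≤ exp (C * t * (1 - t) + (1 - t) * log (H 0) + t * log (H 1)) :=
      exp_le_exp.2 (le_of_convexOn_add_mul_sq hconvex ht)
    _ = exp (C * t * (1 - t)) * H 0 ^ (1 - t) * H 1 ^ t := by
      rw [exp_add, exp_add, rpow_def_of_pos (hpos 0 (left_mem_Icc.2 zero_le_one)),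
        rpow_def_of_pos (hpos 1 (right_mem_Icc.2 zero_le_one))]
      ring_nf

/-- **logarithmic convexity.** If `H : [0,1] → (0,∞)` is continuous, twice
differentiable on `(0,1)`, and `∂²_t(log H(t)) ≥ -2C` on `(0,1)` for some `C ≥ 0`, then
`H(t) ≤ e^{Ct(1-t)} H(0)^{1-t} H(1)^t` for all `t ∈ [0,1]`. -/
theorem log_convexity_interpolation
    (C : ℝ) (hC : 0 ≤ C) (H : ℝ → ℝ)
    (hpos : ∀ t ∈ Set.Icc (0 : ℝ) 1, 0 < H t)
    (hcont : ContinuousOn H (Set.Icc 0 1))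
    (hdiff : ∀ t ∈ Set.Ioo (0 : ℝ) 1,
      DifferentiableAt ℝ H t ∧ DifferentiableAt ℝ (deriv H) t)
    (hconv : ∀ t ∈ Set.Ioo (0 : ℝ) 1,
      -(2 * C) ≤ deriv (deriv fun s => Real.log (H s)) t) :
    ∀ t ∈ Set.Icc (0 : ℝ) 1,
      H t ≤ Real.exp (C * t * (1 - t)) * H 0 ^ (1 - t) * H 1 ^ t :=
  log_convexity_interpolation_general C H hpos hcont hdiff hconv
end
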